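/- For all indices 1 ≤ i < j < k ≤ n, in the presented group G one has t_k^{-1} y_{jk} t_k y_{ik} =_R p_{jk} y_{ik} y_{jk} p_{jk}^{-1}. -/

import Mathlib

namespace PureHilden

/-- The three symbols `p`, `x`, `y`. -/
inductive Sym : Type
  | p | x | y
  deriving DecidableEq

open Sym

/-- Generators of the free group `F`:  `p_{ij}, x_{ij}, y_{ij}` for `1 ≤ i < j ≤ n`
and `t_k` for `1 ≤ k ≤ n`. -/
inductive Gen (n : ℕ) : Type
  | pair (s : Sym) (i j : ℕ) (h : 1 ≤ i ∧ i < j ∧ j ≤ n) : Gen n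
  | t (k : ℕ) (h : 1 ≤ k ∧ k ≤ n) : Gen n

/-- The free group `F` on the set `S`. -/
abbrev FG (n : ℕ) := FreeGroup (Gen n)

/-- `α_{ij}` (symmetrised: `α_{ji} = α_{ij}`); junk value `1` for invalid indices. -/
def gsym (n : ℕ) (s : Sym) (i j : ℕ) : FG n :=
  if h : 1 ≤ min i j ∧ min i j < max i j ∧ max i j ≤ n then
    FreeGroup.of (Gen.pair s (min i j) (max i j) h)
  else 1

def P (n i j : ℕ) : FG n := gsym n Sym.p i j
def X (n i j : ℕ) : FG n := gsym n Sym.x i j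
def Y (n i j : ℕ) : FG n := gsym n Sym.y i j

def T (n k : ℕ) : FG n :=
  if h : 1 ≤ k ∧ k ≤ n then FreeGroup.of (Gen.t k h) else 1

/-- `1 ≤ k ≤ n`. -/
def Idx (n k : ℕ) : Prop := 1 ≤ k ∧ k ≤ n

/-- `1 ≤ i < j ≤ n`. -/
def Idx2 (n i j : ℕ) : Prop := 1 ≤ i ∧ i < j ∧ j ≤ n

/-- `(i,j,k)` is a cyclic rotation of a strictly increasing triple. -/
def cyc3 (i j k : ℕ) : Prop := (i < j ∧ j < k) ∨ (j < k ∧ k < i) ∨ (k < i ∧ i < j)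

/-- `(i,j,k,l)` is a cyclic rotation of a strictly increasing quadruple. -/
def cyc4 (i j k l : ℕ) : Prop :=
  (i < j ∧ j < k ∧ k < l) ∨ (j < k ∧ k < l ∧ l < i) ∨
  (k < l ∧ l < i ∧ i < j) ∨ (l < i ∧ i < j ∧ j < k)

def c2A : List (Sym × Sym × Sym) :=
  [(p,p,p),(p,y,y),(x,p,p),(x,x,p),(x,y,y),(y,p,p),(y,p,x),(y,y,y)]
def c2B : List (Sym × Sym × Sym) :=
  [(p,p,p),(p,x,y),(x,p,p),(x,p,x),(x,x,y),(y,p,p),(y,x,y),(y,y,p)]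
def c2C : List (Sym × Sym × Sym) :=
  [(p,p,p),(p,x,x),(x,p,p),(x,x,x),(x,y,p),(y,p,p),(y,p,y),(y,x,x)]

/-- The allowed triples `(α,β,γ)` for relation (C2), by cyclic ordering of `(i,j,k)`. -/
def C2ok (i j k : ℕ) (a b c : Sym) : Prop :=
  (i < j ∧ j < k ∧ (a,b,c) ∈ c2A) ∨
  (j < k ∧ k < i ∧ (a,b,c) ∈ c2B) ∨
  (k < i ∧ i < j ∧ (a,b,c) ∈ c2C)

/-- The relations `R`, encoded as the words `u * v⁻¹` for each relation `u = v`. -/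
inductive Rel (n : ℕ) : FG n → Prop
  | cpt {i j k : ℕ} (hij : Idx2 n i j) (hk : Idx n k) :
      Rel n (P n i j * T n k * (T n k * P n i j)⁻¹)
  | ctt {i j : ℕ} (hi : Idx n i) (hj : Idx n j) :
      Rel n (T n i * T n j * (T n j * T n i)⁻¹)
  | cxt {i j k : ℕ} (hij : Idx2 n i j) (hk : Idx n k) (hne : k ≠ i) :
      Rel n (X n i j * T n k * (T n k * X n i j)⁻¹)
  | cyt {i j k : ℕ} (hij : Idx2 n i j) (hk : Idx n k) (hne : k ≠ j) :
      Rel n (Y n i j * T n k * (T n k * Y n i j)⁻¹)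
  | c1 (a b : Sym) {i j k l : ℕ} (hi : Idx n i) (hj : Idx n j) (hk : Idx n k)
      (hl : Idx n l) (hc : cyc4 i j k l) :
      Rel n (gsym n a i j * gsym n b k l * (gsym n b k l * gsym n a i j)⁻¹)
  | c2 (a b c : Sym) {i j k : ℕ} (hi : Idx n i) (hj : Idx n j) (hk : Idx n k)
      (h : C2ok i j k a b c) :
      Rel n (gsym n a i j * (gsym n b i k * gsym n c j k) *
             (gsym n b i k * gsym n c j k * gsym n a i j)⁻¹)
  | c3 (a b : Sym) {i j k l : ℕ} (hi : Idx n i) (hj : Idx n j) (hk : Idx n k)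
      (hl : Idx n l) (hc : cyc4 i j k l) :
      Rel n (gsym n a i k * (P n j k * gsym n b j l * (P n j k)⁻¹) *
             (P n j k * gsym n b j l * (P n j k)⁻¹ * gsym n a i k)⁻¹)
  | mx {i j : ℕ} (hij : Idx2 n i j) :
      Rel n (X n i j * P n i j * T n i * (P n i j * T n i * X n i j)⁻¹)
  | my {i j : ℕ} (hij : Idx2 n i j) :
      Rel n (Y n i j * P n i j * T n j * (P n i j * T n j * Y n i j)⁻¹)

/-- The presented group `G = ⟨S ∣ R⟩`. -/
abbrev GG (n : ℕ) := FG n ⧸ Subgroup.normalClosure {w : FG n | Rel n w}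

/-- The quotient homomorphism `π : F → G`. -/
def piG (n : ℕ) : FG n →* GG n := QuotientGroup.mk' _

/-- The map defining `Φ_{σ_m}` on generators. -/
def phiSigmaMap (n m : ℕ) : Gen n → FG n
  | Gen.pair s i j _ =>
      if i = m ∧ j = m + 1 then
        match s with
        | Sym.p => P n m (m+1)
        | Sym.x => (T n (m+1))⁻¹ * Y n m (m+1) * T n (m+1)
        | Sym.y => X n m (m+1)
      else if i = m then gsym n s (m+1) j
      else if j = m then gsym n s (m+1) i
      else if i = m + 1 then P n m (m+1) * gsym n s m j * (P n m (m+1))⁻¹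
      else if j = m + 1 then P n m (m+1) * gsym n s m i * (P n m (m+1))⁻¹
      else gsym n s i j
  | Gen.t k _ =>
      if k = m then T n (m+1) else if k = m + 1 then T n m else T n k

/-- `Φ_{σ_m} : F → F`. -/
def phiSigma (n m : ℕ) : FG n →* FG n := FreeGroup.lift (phiSigmaMap n m)

/-- The map defining `Ψ_{σ_m}` on generators. -/
def psiSigmaMap (n m : ℕ) : Gen n → FG n
  | Gen.pair s i j _ =>
      if i = m ∧ j = m + 1 then
        match s with
        | Sym.p => P n m (m+1)
        | Sym.x => Y n m (m+1)
        | Sym.y => T n m * X n m (m+1) * (T n m)⁻¹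
      else if i = m then (P n m (m+1))⁻¹ * gsym n s (m+1) j * P n m (m+1)
      else if j = m then (P n m (m+1))⁻¹ * gsym n s (m+1) i * P n m (m+1)
      else if i = m + 1 then gsym n s m j
      else if j = m + 1 then gsym n s m i
      else gsym n s i j
  | Gen.t k _ =>
      if k = m then T n (m+1) else if k = m + 1 then T n m else T n k

/-- `Ψ_{σ_m} : F → F`. -/
def psiSigma (n m : ℕ) : FG n →* FG n := FreeGroup.lift (psiSigmaMap n m)

/-- The map defining `Φ_{τ_m}` on generators. -/
def phiTauMap (n m : ℕ) : Gen n → FG n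
  | Gen.pair s i j _ =>
      match s with
      | Sym.p => P n i j
      | Sym.x => if m = i then (X n i j)⁻¹ * P n i j else X n i j
      | Sym.y => if m = j then (Y n i j)⁻¹ * P n i j else Y n i j
  | Gen.t k _ => T n k

/-- `Φ_{τ_m} : F → F`. -/
def phiTau (n m : ℕ) : FG n →* FG n := FreeGroup.lift (phiTauMap n m)

/-- The map defining `Ψ_{τ_m}` on generators. -/
def psiTauMap (n m : ℕ) : Gen n → FG n
  | Gen.pair s i j _ =>
      match s with
      | Sym.p => P n i j
      | Sym.x => if m = i then P n i j * (X n i j)⁻¹ else X n i j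
      | Sym.y => if m = j then P n i j * (Y n i j)⁻¹ else Y n i j
  | Gen.t k _ => T n k

/-- `Ψ_{τ_m} : F → F`. -/
def psiTau (n m : ℕ) : FG n →* FG n := FreeGroup.lift (psiTauMap n m)

/-! Relations (C-pt) and (M-y) say that `p_{jk}` and `y_{jk}` commute with `t_k` and `p_{jk} t_k`
respectively, so `t_k⁻¹ y_{jk} t_k = p_{jk} y_{jk} p_{jk}⁻¹`.
Relation (C2) for the rotation `(k,i,j)` makes `y_{ik}` commute with `y_{jk} p_{ij}` and with
`p_{jk} p_{ij}`, hence with `y_{jk} p_{jk}⁻¹`, and the identity follows. -/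

section GroupLemmas

variable {G : Type*} [Group G] {a b q r t : G}

theorem _root_.Commute.mul_inv_of_mul_right (hb : Commute a (b * r)) (hq : Commute a (q * r)) :
    Commute a (b * q⁻¹) := by
  simpa only [mul_inv_rev, mul_assoc, mul_inv_cancel_left] using hb.mul_right hq.inv_right

theorem _root_.inv_mul_mul_eq_conj_of_commute (hqt : Commute q t) (hb : Commute b (q * t)) :
    t⁻¹ * b * t = q * b * q⁻¹ := by
  rw [hqt.eq] at hb
  calc t⁻¹ * b * t = t⁻¹ * (b * (t * q)) * q⁻¹ := by group
    _ = t⁻¹ * (t * q * b) * q⁻¹ := by rw [hb.eq]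
    _ = q * b * q⁻¹ := by group

end GroupLemmas

theorem gsym_symm (n : ℕ) (s : Sym) (i j : ℕ) : gsym n s i j = gsym n s j i := by
  simp only [gsym, min_comm, max_comm]

theorem piG_eq_of_rel {n : ℕ} {u v : FG n} (h : Rel n (u * v⁻¹)) : piG n u = piG n v := by
  have h1 : piG n (u * v⁻¹) = 1 :=
    (QuotientGroup.eq_one_iff _).mpr (Subgroup.subset_normalClosure h)
  rwa [map_mul, map_inv, mul_inv_eq_one] at h1

theorem commute_piG_of_rel {n : ℕ} {u v : FG n} (h : Rel n (u * v * (v * u)⁻¹)) :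
    Commute (piG n u) (piG n v) := by
  simpa only [Commute, SemiconjBy, map_mul] using piG_eq_of_rel h

theorem commute_piG_of_mem_c2B {n i j k : ℕ} (h : 1 ≤ i ∧ i < j ∧ j < k ∧ k ≤ n)
    {a b c : Sym} (habc : (a, b, c) ∈ c2B) :
    Commute (piG n (gsym n a i k)) (piG n (gsym n b j k * gsym n c i j)) := by
  have hC2 := Rel.c2 (n := n) a b c (i := k) (j := i) (k := j)
    ⟨by omega, h.2.2.2⟩ ⟨h.1, by omega⟩ ⟨by omega, by omega⟩ (.inr (.inl ⟨h.2.1, h.2.2.1, habc⟩))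
  rw [gsym_symm n a k i, gsym_symm n b k j] at hC2
  exact commute_piG_of_rel hC2

theorem stmt12_general (n : ℕ) (i j k : ℕ)
    (h : 1 ≤ i ∧ i < j ∧ j < k ∧ k ≤ n) :
    piG n ((T n k)⁻¹ * Y n j k * T n k * Y n i k) =
    piG n (P n j k * Y n i k * Y n j k * (P n j k)⁻¹) := by
  have hjk : Idx2 n j k := ⟨by omega, h.2.2.1, h.2.2.2⟩
  have hpt : Commute (piG n (P n j k)) (piG n (T n k)) :=
    commute_piG_of_rel (Rel.cpt hjk ⟨by omega, h.2.2.2⟩)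
  have hypt : Commute (piG n (Y n j k)) (piG n (P n j k * T n k)) :=
    commute_piG_of_rel (by simpa only [mul_assoc] using Rel.my hjk)
  have hyyp : Commute (piG n (Y n i k)) (piG n (Y n j k * P n i j)) :=
    commute_piG_of_mem_c2B h (by decide : (Sym.y, Sym.y, Sym.p) ∈ c2B)
  have hypp : Commute (piG n (Y n i k)) (piG n (P n j k * P n i j)) :=
    commute_piG_of_mem_c2B h (by decide : (Sym.y, Sym.p, Sym.p) ∈ c2B)
  simp only [map_mul, map_inv] at hypt hyyp hypp ⊢
  have hconj := inv_mul_mul_eq_conj_of_commute hpt hypt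
  have hcomm := (hyyp.mul_inv_of_mul_right hypp).eq
  calc (piG n (T n k))⁻¹ * piG n (Y n j k) * piG n (T n k) * piG n (Y n i k)
      = piG n (P n j k) * (piG n (Y n j k) * (piG n (P n j k))⁻¹ * piG n (Y n i k)) := by
        rw [hconj]; group
    _ = piG n (P n j k) * piG n (Y n i k) * piG n (Y n j k) * (piG n (P n j k))⁻¹ := by
        rw [← hcomm]; group

/-- STATEMENT 12: For `1 ≤ i < j < k ≤ n`, in `G`:
`t_k⁻¹ y_jk t_k y_ik =_R p_jk y_ik y_jk p_jk⁻¹`. -/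
theorem stmt12 (n : ℕ) (hn : 2 ≤ n) (i j k : ℕ)
    (h : 1 ≤ i ∧ i < j ∧ j < k ∧ k ≤ n) :
    piG n ((T n k)⁻¹ * Y n j k * T n k * Y n i k) =
    piG n (P n j k * Y n i k * Y n j k * (P n j k)⁻¹) :=
  stmt12_general n i j k h

end PureHilden
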